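/- arXiv:2212.00162 — 9 statements merged into one kernel-verified Lean document; each statement's English description precedes it below -/
import Mathlib

section
/- FIFO-tightened feasibility condition (Equation (5)): Suppose there exists a vector τ ∈ ℝ^M with τ_i > 0 for all i such that for every k ∈ {1,…,M} the pre-delay constraint Σ_{j=1}^{k} τ_j ≤ t_k + T_pre,k and the post-delay constraint Σ_{j=1}^{k} τ_j ≥ t_R − T_post,k both hold. Then for all indices 1 ≤ j < i ≤ M it holds that t_i + T_pre,i > t_R − T_post,j. -/
/-- Equation (5): FIFO-tightened feasibility condition. If some
duration vector `τ` with strictly positive entries satisfies all pre-delay and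
post-delay constraints, then for all `j < i` the pre-delay deadline of packet `i`
strictly exceeds the post-delay lower bound of packet `j`. -/
theorem fifo_feasibility_condition
    (M : ℕ) (hM : 1 ≤ M)
    (t Tpre Tpost : ℕ → ℝ) (tR : ℝ)
    (ht1 : t 1 = 0)
    (hmono : ∀ i, 1 ≤ i → i < M → t i ≤ t (i + 1))
    (hTpre : ∀ i ∈ Finset.Icc 1 M, 0 < Tpre i)
    (hTpost : ∀ i ∈ Finset.Icc 1 M, 0 < Tpost i)
    (τ : ℕ → ℝ)
    (hτ : ∀ i ∈ Finset.Icc 1 M, 0 < τ i)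
    (hpre : ∀ k ∈ Finset.Icc 1 M, ∑ j ∈ Finset.Icc 1 k, τ j ≤ t k + Tpre k)
    (hpost : ∀ k ∈ Finset.Icc 1 M, tR - Tpost k ≤ ∑ j ∈ Finset.Icc 1 k, τ j) :
    ∀ i ∈ Finset.Icc 1 M, ∀ j, 1 ≤ j → j < i → tR - Tpost j < t i + Tpre i := by
  intro i hi j hj1 hji
  simp only [Finset.mem_Icc] at hi
  have hjM : j ∈ Finset.Icc 1 M := Finset.mem_Icc.2 ⟨hj1, le_trans hji.le hi.2⟩
  have h1 : tR - Tpost j ≤ ∑ k ∈ Finset.Icc 1 j, τ k := hpost j hjM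
  have h2 : (∑ k ∈ Finset.Icc 1 j, τ k) < ∑ k ∈ Finset.Icc 1 i, τ k := by
    apply Finset.sum_lt_sum_of_subset (Finset.Icc_subset_Icc_right hji.le)
      (Finset.mem_Icc.2 ⟨hi.1, le_refl i⟩)
      (by simp [Finset.mem_Icc]; omega)
      (hτ i (Finset.mem_Icc.2 hi))
    intro k hk _
    exact (hτ k (Finset.mem_Icc.2 ⟨(Finset.mem_Icc.1 hk).1, le_trans (Finset.mem_Icc.1 hk).2 hi.2⟩)).le
  have h3 := hpre i (Finset.mem_Icc.2 hi)
  linarith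
end

section
/- Exchange lemma, upper side (packet-level form of Lemma 1, items 1–2): Let τ be energy-optimal for the two-sided energy-minimization problem. If for some index i ∈ {1,…,M−1} it holds that τ_i < τ_{i+1}, then the pre-delay constraint of packet i is tight: Σ_{j=1}^{i} τ_j = t_i + T_pre,i (i.e., packet i is pre-critical). Equivalently, if packet i's departure time is strictly before its pre-delay deadline, then τ_i ≥ τ_{i+1}. -/
lemma convex_exchange (w : ℝ → ℝ) (hconv : StrictConvexOn ℝ (Set.Ioi (0:ℝ)) w)
    (a b ε : ℝ) (ha : 0 < a) (hab : a < b) (hε : 0 < ε) (hε2 : ε ≤ (b - a) / 2) :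
    w (a + ε) + w (b - ε) < w a + w b := by
  have hba : 0 < b - a := by linarith
  set p : ℝ := (b - a - ε) / (b - a) with hp
  set q : ℝ := ε / (b - a) with hq
  have hp0 : 0 < p := div_pos (by linarith) hba
  have hq0 : 0 < q := div_pos hε hba
  have hpq : p + q = 1 := by rw [hp, hq, ← add_div, sub_add_cancel, div_self (ne_of_gt hba)]
  have haI : a ∈ Set.Ioi (0:ℝ) := ha
  have hbI : b ∈ Set.Ioi (0:ℝ) := by exact lt_trans ha hab
  have h1 := hconv.2 haI hbI (ne_of_lt hab) hp0 hq0 hpq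
  have h2 := hconv.2 haI hbI (ne_of_lt hab) hq0 hp0 (by linarith)
  simp only [smul_eq_mul] at h1 h2
  have e1 : p * a + q * b = a + ε := by rw [hp, hq, div_mul_eq_mul_div, div_mul_eq_mul_div, ← add_div, div_eq_iff (ne_of_gt hba)]; ring
  have e2 : q * a + p * b = b - ε := by rw [hp, hq, div_mul_eq_mul_div, div_mul_eq_mul_div, ← add_div, div_eq_iff (ne_of_gt hba)]; ring
  rw [e1] at h1
  rw [e2] at h2
  have key : p * w a + q * w b + (q * w a + p * w b) = (p + q) * (w a + w b) := by ring
  rw [hpq, one_mul] at key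
  linarith

/-- Feasibility for the two-sided energy-minimization problem: positivity of the
durations, the non-idling constraints (a), total-duration constraint (b), the
pre-delay constraints (c) and the post-delay constraints (d). -/
def EnergyFeasible (M : ℕ) (t d Tpre Tpost : ℕ → ℝ) (tR tE : ℝ) (τ : ℕ → ℝ) : Prop :=
  (∀ i ∈ Finset.Icc 1 M, 0 < τ i) ∧
  (∀ k, 1 ≤ k → k < M → ∑ j ∈ Finset.Icc 1 k, d j ≤ ∑ j ∈ Finset.Icc 1 k, τ j) ∧
  (∑ j ∈ Finset.Icc 1 M, τ j = tE) ∧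
  (∀ k ∈ Finset.Icc 1 M, ∑ j ∈ Finset.Icc 1 k, τ j ≤ t k + Tpre k) ∧
  (∀ k ∈ Finset.Icc 1 M, tR - Tpost k ≤ ∑ j ∈ Finset.Icc 1 k, τ j)

/-- exchange lemma, upper side: if `τ` is energy-optimal and
`τ i < τ (i+1)` for some `i ∈ {1,…,M-1}`, then packet `i` is pre-critical:
its departure time equals its pre-delay deadline `t i + Tpre i`. -/
theorem exchange_upper_side
    (M : ℕ) (hM : 1 ≤ M)
    (t d Tpre Tpost : ℕ → ℝ) (tR tE : ℝ)
    (ht1 : t 1 = 0)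
    (hmono : ∀ i, 1 ≤ i → i < M → t i ≤ t (i + 1))
    (hTpre : ∀ i ∈ Finset.Icc 1 M, 0 < Tpre i)
    (hTpost : ∀ i ∈ Finset.Icc 1 M, 0 < Tpost i)
    (hd : ∀ i, 1 ≤ i → i < M → d i = t (i + 1) - t i)
    (hdM : d M = tE - t M)
    (w : ℝ → ℝ)
    (hconv : StrictConvexOn ℝ (Set.Ioi (0:ℝ)) w)
    (hanti : StrictAntiOn w (Set.Ioi (0:ℝ)))
    (hwpos : ∀ x ∈ Set.Ioi (0:ℝ), 0 < w x)
    (τ : ℕ → ℝ)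
    (hfeas : EnergyFeasible M t d Tpre Tpost tR tE τ)
    (hopt : ∀ σ, EnergyFeasible M t d Tpre Tpost tR tE σ →
      ∑ i ∈ Finset.Icc 1 M, w (τ i) ≤ ∑ i ∈ Finset.Icc 1 M, w (σ i))
    (i : ℕ) (hi1 : 1 ≤ i) (hiM : i < M)
    (hlt : τ i < τ (i + 1)) :
    ∑ j ∈ Finset.Icc 1 i, τ j = t i + Tpre i := by
  obtain ⟨hpos, hnonidle, htot, hpre, hpost⟩ := hfeas
  by_contra hne
  have hiIcc : i ∈ Finset.Icc 1 M := Finset.mem_Icc.mpr ⟨hi1, le_of_lt hiM⟩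
  have hi1Icc : i + 1 ∈ Finset.Icc 1 M := Finset.mem_Icc.mpr ⟨le_trans hi1 (Nat.le_succ i), hiM⟩
  have hSi : ∑ j ∈ Finset.Icc 1 i, τ j < t i + Tpre i :=
    lt_of_le_of_ne (hpre i hiIcc) hne
  have ha : 0 < τ i := hpos i hiIcc
  have hb : 0 < τ (i + 1) := hpos (i + 1) hi1Icc
  have hδ1 : 0 < (τ (i + 1) - τ i) / 2 := by linarith
  have hδ2 : 0 < t i + Tpre i - ∑ j ∈ Finset.Icc 1 i, τ j := by linarith
  set ε : ℝ := min ((τ (i + 1) - τ i) / 2) (t i + Tpre i - ∑ j ∈ Finset.Icc 1 i, τ j) with hεdef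
  have hε : 0 < ε := lt_min hδ1 hδ2
  have hεδ1 : ε ≤ (τ (i + 1) - τ i) / 2 := min_le_left _ _
  have hεδ2 : ε ≤ t i + Tpre i - ∑ j ∈ Finset.Icc 1 i, τ j := min_le_right _ _
  set σ : ℕ → ℝ := fun j => τ j + (if j = i then ε else 0) - (if j = i + 1 then ε else 0) with hσ
  have hii1 : i ≠ i + 1 := Nat.ne_of_lt (Nat.lt_succ_self i)
  have hsum : ∀ k, ∑ j ∈ Finset.Icc 1 k, σ j
      = ∑ j ∈ Finset.Icc 1 k, τ j + (if i ∈ Finset.Icc 1 k then ε else 0)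
        - (if i + 1 ∈ Finset.Icc 1 k then ε else 0) := by
    intro k
    simp only [hσ, Finset.sum_sub_distrib, Finset.sum_add_distrib, Finset.sum_ite_eq']
  have hmem : ∀ k, i + 1 ∈ Finset.Icc 1 k → i ∈ Finset.Icc 1 k := by
    intro k hk
    simp only [Finset.mem_Icc] at *
    omega
  have hge : ∀ k, ∑ j ∈ Finset.Icc 1 k, τ j ≤ ∑ j ∈ Finset.Icc 1 k, σ j := by
    intro k
    rw [hsum k]
    by_cases h1 : i + 1 ∈ Finset.Icc 1 k
    · simp [h1, hmem k h1]
    · by_cases h0 : i ∈ Finset.Icc 1 k <;> simp [h0, h1] <;> linarith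
  have hσi : σ i = τ i + ε := by simp [hσ, hii1]
  have hσi1 : σ (i + 1) = τ (i + 1) - ε := by simp [hσ, hii1.symm]
  have hfeasσ : EnergyFeasible M t d Tpre Tpost tR tE σ := by
    refine ⟨?_, ?_, ?_, ?_, ?_⟩
    · intro j hj
      by_cases hji : j = i
      · subst hji; rw [hσi]; linarith
      · by_cases hji1 : j = i + 1
        · subst hji1; rw [hσi1]; linarith
        · have : σ j = τ j := by simp [hσ, hji, hji1]
          rw [this]; exact hpos j hj
    · intro k hk1 hkM
      exact le_trans (hnonidle k hk1 hkM) (hge k)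
    · rw [hsum M]
      simp [hiIcc, hi1Icc, htot]
    · intro k hk
      rw [hsum k]
      by_cases h1 : i + 1 ∈ Finset.Icc 1 k
      · simpa [h1, hmem k h1] using hpre k hk
      · by_cases h0 : i ∈ Finset.Icc 1 k
        · have hki : k = i := by
            simp only [Finset.mem_Icc] at h0 h1 hk
            omega
          subst hki
          simp only [h0, h1, if_true, if_false, sub_zero]
          linarith
        · simpa [h0, h1] using hpre k hk
    · intro k hk
      exact le_trans (hpost k hk) (hge k)
  have hzero : ∀ x ∈ Finset.Icc 1 M, x ∉ ({i, i + 1} : Finset ℕ) →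
      w (σ x) - w (τ x) = 0 := by
    intro x _ hx
    simp only [Finset.mem_insert, Finset.mem_singleton, not_or] at hx
    simp [hσ, hx.1, hx.2]
  have hpairsub : ({i, i + 1} : Finset ℕ) ⊆ Finset.Icc 1 M := by
    intro x hx
    simp only [Finset.mem_insert, Finset.mem_singleton] at hx
    rcases hx with h | h <;> subst h <;> assumption
  have hdiff : ∑ j ∈ Finset.Icc 1 M, (w (σ j) - w (τ j))
      = (w (σ i) - w (τ i)) + (w (σ (i + 1)) - w (τ (i + 1))) := by
    rw [← Finset.sum_subset hpairsub hzero, Finset.sum_pair hii1]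
  have hkey : w (τ i + ε) + w (τ (i + 1) - ε) < w (τ i) + w (τ (i + 1)) :=
    convex_exchange w hconv (τ i) (τ (i + 1)) ε ha hlt hε hεδ1
  have hdist : ∑ j ∈ Finset.Icc 1 M, (w (σ j) - w (τ j))
      = ∑ j ∈ Finset.Icc 1 M, w (σ j) - ∑ j ∈ Finset.Icc 1 M, w (τ j) :=
    Finset.sum_sub_distrib _ _
  rw [hdiff, hσi, hσi1] at hdist
  have hcost : ∑ j ∈ Finset.Icc 1 M, w (σ j) < ∑ j ∈ Finset.Icc 1 M, w (τ j) := by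
    linarith
  exact absurd (hopt σ hfeasσ) (not_le.mpr hcost)
end

section
/- Exchange lemma, lower side (packet-level form of Lemma 1, item 3): Let τ be energy-optimal for the two-sided energy-minimization problem. If for some index i ∈ {1,…,M−1} it holds that τ_i > τ_{i+1}, then at least one lower-bound constraint of packet i is tight: either Σ_{j=1}^{i} τ_j = Σ_{j=1}^{i} d_j (packet i is a regular end packet) or Σ_{j=1}^{i} τ_j = t_R − T_post,i (packet i is post-critical). -/
/-- exchange lemma, lower side: if `τ` is energy-optimal and
`τ i > τ (i+1)` for some `i ∈ {1,…,M-1}`, then at least one lower-bound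
constraint of packet `i` is tight: either packet `i` is a regular end packet
(`∑_{j≤i} τ j = ∑_{j≤i} d j`) or it is post-critical
(`∑_{j≤i} τ j = tR - Tpost i`). -/
theorem exchange_lower_side
    (M : ℕ) (hM : 1 ≤ M)
    (t d Tpre Tpost : ℕ → ℝ) (tR tE : ℝ)
    (ht1 : t 1 = 0)
    (hmono : ∀ i, 1 ≤ i → i < M → t i ≤ t (i + 1))
    (hTpre : ∀ i ∈ Finset.Icc 1 M, 0 < Tpre i)
    (hTpost : ∀ i ∈ Finset.Icc 1 M, 0 < Tpost i)
    (hd : ∀ i, 1 ≤ i → i < M → d i = t (i + 1) - t i)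
    (hdM : d M = tE - t M)
    (w : ℝ → ℝ)
    (hconv : StrictConvexOn ℝ (Set.Ioi (0:ℝ)) w)
    (hanti : StrictAntiOn w (Set.Ioi (0:ℝ)))
    (hwpos : ∀ x ∈ Set.Ioi (0:ℝ), 0 < w x)
    (τ : ℕ → ℝ)
    (hfeas : EnergyFeasible M t d Tpre Tpost tR tE τ)
    (hopt : ∀ σ, EnergyFeasible M t d Tpre Tpost tR tE σ →
      ∑ i ∈ Finset.Icc 1 M, w (τ i) ≤ ∑ i ∈ Finset.Icc 1 M, w (σ i))
    (i : ℕ) (hi1 : 1 ≤ i) (hiM : i < M)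
    (hgt : τ i > τ (i + 1)) :
    (∑ j ∈ Finset.Icc 1 i, τ j = ∑ j ∈ Finset.Icc 1 i, d j) ∨
    (∑ j ∈ Finset.Icc 1 i, τ j = tR - Tpost i) := by
  classical
  by_contra hcon
  push_neg at hcon
  obtain ⟨hne1, hne2⟩ := hcon
  obtain ⟨hpos, hA, hB, hC, hD⟩ := hfeas
  have hiMem : i ∈ Finset.Icc 1 M := Finset.mem_Icc.mpr ⟨hi1, hiM.le⟩
  have hi1Mem : i + 1 ∈ Finset.Icc 1 M := Finset.mem_Icc.mpr ⟨by omega, by omega⟩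
  have hbpos : 0 < τ i := hpos i hiMem
  have hapos : 0 < τ (i + 1) := hpos _ hi1Mem
  have hS1 : ∑ j ∈ Finset.Icc 1 i, d j < ∑ j ∈ Finset.Icc 1 i, τ j :=
    lt_of_le_of_ne (hA i hi1 hiM) (Ne.symm hne1)
  have hS2 : tR - Tpost i < ∑ j ∈ Finset.Icc 1 i, τ j :=
    lt_of_le_of_ne (by simpa using hD i hiMem) (Ne.symm hne2)
  set g : ℝ := τ i - τ (i + 1) with hg
  have hgpos : 0 < g := by simp only [hg]; linarith
  set ε : ℝ := min (min (∑ j ∈ Finset.Icc 1 i, τ j - ∑ j ∈ Finset.Icc 1 i, d j)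
      (∑ j ∈ Finset.Icc 1 i, τ j - (tR - Tpost i))) (g / 2) with hε
  have hεpos : 0 < ε := lt_min (lt_min (by linarith) (by linarith)) (by linarith)
  have hεg : ε < g := lt_of_le_of_lt (min_le_right _ _) (by linarith)
  have hε1 : ε ≤ ∑ j ∈ Finset.Icc 1 i, τ j - ∑ j ∈ Finset.Icc 1 i, d j :=
    le_trans (min_le_left _ _) (min_le_left _ _)
  have hε2 : ε ≤ ∑ j ∈ Finset.Icc 1 i, τ j - (tR - Tpost i) :=
    le_trans (min_le_left _ _) (min_le_right _ _)
  set σ : ℕ → ℝ := fun j => τ j + (if j = i then -ε else 0) + (if j = i + 1 then ε else 0)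
    with hσ
  have hpre : ∀ k, ∑ j ∈ Finset.Icc 1 k, σ j =
      ∑ j ∈ Finset.Icc 1 k, τ j + (if i ∈ Finset.Icc 1 k then -ε else 0)
        + (if i + 1 ∈ Finset.Icc 1 k then ε else 0) := by
    intro k
    simp [hσ, Finset.sum_add_distrib, Finset.sum_ite_eq']
  have hij : ¬ (i = i + 1) := by omega
  have hji : ¬ (i + 1 = i) := by omega
  have hσi : σ i = τ i - ε := by
    simp only [hσ, if_neg hij]; simp [sub_eq_add_neg]
  have hσi1 : σ (i + 1) = τ (i + 1) + ε := by
    simp only [hσ, if_neg hji]; simp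
  have hσfeas : EnergyFeasible M t d Tpre Tpost tR tE σ := by
    refine ⟨?_, ?_, ?_, ?_, ?_⟩
    · intro j hj
      by_cases h1 : j = i
      · subst h1; rw [hσi]; linarith
      · by_cases h2 : j = i + 1
        · subst h2; rw [hσi1]; linarith [hpos _ hj]
        · have : σ j = τ j := by simp only [hσ]; rw [if_neg h1, if_neg h2]; ring
          rw [this]; exact hpos j hj
    · intro k hk1 hkM
      rw [hpre]
      simp only [Finset.mem_Icc]
      split_ifs with h1 h2 h2
      · linarith [hA k hk1 hkM]
      · have hk : k = i := by omega
        subst hk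
        linarith
      · exfalso; omega
      · linarith [hA k hk1 hkM]
    · rw [hpre]
      simp only [Finset.mem_Icc]
      rw [if_pos ⟨hi1, hiM.le⟩, if_pos ⟨by omega, by omega⟩]
      linarith [hB]
    · intro k hk
      rw [hpre]
      simp only [Finset.mem_Icc]
      split_ifs with h1 h2 h2
      · linarith [hC k hk]
      · linarith [hC k hk]
      · exfalso; omega
      · linarith [hC k hk]
    · intro k hk
      rw [hpre]
      simp only [Finset.mem_Icc]
      split_ifs with h1 h2 h2
      · linarith [hD k hk]
      · have hik : k = i := by omega
        subst hik
        linarith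
      · exfalso; omega
      · linarith [hD k hk]
  -- strict convexity exchange inequality
  have hLg : ε / g * g = ε := div_mul_cancel₀ _ (ne_of_gt hgpos)
  have hLg' : ε / g * (τ i - τ (i + 1)) = ε := by rw [← hg]; exact hLg
  have hlam1 : 0 < ε / g := div_pos hεpos hgpos
  have hlam2 : ε / g < 1 := (div_lt_one hgpos).mpr hεg
  have hneab : τ (i + 1) ≠ τ i := ne_of_lt hgt
  have h1 := hconv.2 (Set.mem_Ioi.mpr hapos) (Set.mem_Ioi.mpr hbpos) hneab
    (show (0:ℝ) < 1 - ε / g by linarith) hlam1 (by ring)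
  have h2 := hconv.2 (Set.mem_Ioi.mpr hapos) (Set.mem_Ioi.mpr hbpos) hneab
    hlam1 (show (0:ℝ) < 1 - ε / g by linarith) (by ring)
  simp only [smul_eq_mul] at h1 h2
  have e1 : (1 - ε / g) * τ (i + 1) + ε / g * τ i = τ (i + 1) + ε := by
    linear_combination hLg'
  have e2 : ε / g * τ (i + 1) + (1 - ε / g) * τ i = τ i - ε := by
    linear_combination -hLg'
  rw [e1] at h1
  rw [e2] at h2
  have key : w (τ (i + 1) + ε) + w (τ i - ε) < w (τ (i + 1)) + w (τ i) := by
    nlinarith [h1, h2]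
  -- cost comparison
  have hsplit : ∀ f : ℕ → ℝ, ∑ j ∈ Finset.Icc 1 M, f j
      = f i + (f (i + 1) + ∑ j ∈ ((Finset.Icc 1 M).erase i).erase (i + 1), f j) := by
    intro f
    rw [Finset.add_sum_erase _ f (Finset.mem_erase.mpr ⟨by omega, hi1Mem⟩),
      Finset.add_sum_erase _ f hiMem]
  have hrest : ∑ j ∈ ((Finset.Icc 1 M).erase i).erase (i + 1), w (σ j)
      = ∑ j ∈ ((Finset.Icc 1 M).erase i).erase (i + 1), w (τ j) := by
    refine Finset.sum_congr rfl ?_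
    intro j hj
    have h2 : j ≠ i + 1 := (Finset.mem_erase.mp hj).1
    have h1 : j ≠ i := (Finset.mem_erase.mp (Finset.mem_erase.mp hj).2).1
    have : σ j = τ j := by simp only [hσ]; rw [if_neg h1, if_neg h2]; ring
    rw [this]
  have hcost : ∑ j ∈ Finset.Icc 1 M, w (σ j) < ∑ j ∈ Finset.Icc 1 M, w (τ j) := by
    rw [hsplit (fun j => w (σ j)), hsplit (fun j => w (τ j))]
    rw [hrest, hσi, hσi1]
    linarith [key]
  have := hopt σ hσfeas
  linarith
end

section
/- Lemma 3 (non-increasing durations under post-delay constraints only): Consider the energy-minimization problem in the one-sided, post-delay-constrained case, i.e., with pre-delays T_pre,i = t_R − t_i for all i (so every pre-delay constraint reads Σ_{j=1}^{k} τ_j ≤ t_R) and end time t_E ≤ t_R. Then any energy-optimal τ satisfies τ_i ≥ τ_{i+1} for all i ∈ {1,…,M−1}; that is, the transmission durations are non-increasing in the packet index. -/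
/-- Lemma 3: in the one-sided, post-delay-constrained case
(`Tpre i = tR - t i` for all `i`, so every pre-delay constraint reads
`∑_{j≤k} τ j ≤ tR`, and `tE ≤ tR`), any energy-optimal `τ` has
non-increasing transmission durations: `τ i ≥ τ (i+1)` for all `i < M`. -/
theorem postdelay_only_nonincreasing
    (M : ℕ) (hM : 1 ≤ M)
    (t d Tpre Tpost : ℕ → ℝ) (tR tE : ℝ)
    (ht1 : t 1 = 0)
    (hmono : ∀ i, 1 ≤ i → i < M → t i ≤ t (i + 1))
    (hTpre : ∀ i ∈ Finset.Icc 1 M, 0 < Tpre i)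
    (hTpost : ∀ i ∈ Finset.Icc 1 M, 0 < Tpost i)
    (hd : ∀ i, 1 ≤ i → i < M → d i = t (i + 1) - t i)
    (hdM : d M = tE - t M)
    (w : ℝ → ℝ)
    (hconv : StrictConvexOn ℝ (Set.Ioi (0:ℝ)) w)
    (hanti : StrictAntiOn w (Set.Ioi (0:ℝ)))
    (hwpos : ∀ x ∈ Set.Ioi (0:ℝ), 0 < w x)
    (hpreDef : ∀ i ∈ Finset.Icc 1 M, Tpre i = tR - t i)
    (htE : tE ≤ tR)
    (τ : ℕ → ℝ)
    (hfeas : EnergyFeasible M t d Tpre Tpost tR tE τ)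
    (hopt : ∀ σ, EnergyFeasible M t d Tpre Tpost tR tE σ →
      ∑ i ∈ Finset.Icc 1 M, w (τ i) ≤ ∑ i ∈ Finset.Icc 1 M, w (σ i)) :
    ∀ i, 1 ≤ i → i < M → τ (i + 1) ≤ τ i := by
  obtain ⟨hpos, ha, hb, hc, hdcon⟩ := hfeas
  intro i h1 hiM
  by_contra hlt
  push_neg at hlt
  set ε : ℝ := (τ (i+1) - τ i) / 2 with hε
  have hεpos : 0 < ε := by simp only [hε]; linarith
  set σ : ℕ → ℝ := fun j => τ j + (if j = i then ε else 0) + (if j = i+1 then -ε else 0)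
    with hσ
  have hiM' : i ∈ Finset.Icc 1 M := by simp [Finset.mem_Icc]; omega
  have hi1M : i+1 ∈ Finset.Icc 1 M := by simp [Finset.mem_Icc]; omega
  have hτipos := hpos i hiM'
  have hτi1pos := hpos (i+1) hi1M
  have hnei : i ≠ i + 1 := by omega
  have hσi : σ i = τ i + ε := by simp [hσ, hnei]
  have hσi1 : σ (i+1) = τ (i+1) - ε := by simp [hσ, Nat.succ_ne_self]; ring
  have hσother : ∀ j, j ≠ i → j ≠ i + 1 → σ j = τ j := by
    intro j hj1 hj2; simp [hσ, hj1, hj2]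
  have hsum : ∀ k, ∑ j ∈ Finset.Icc 1 k, σ j
      = ∑ j ∈ Finset.Icc 1 k, τ j + (if i ∈ Finset.Icc 1 k then ε else 0)
        + (if i+1 ∈ Finset.Icc 1 k then -ε else 0) := by
    intro k
    simp only [hσ]
    rw [Finset.sum_add_distrib, Finset.sum_add_distrib,
      Finset.sum_ite_eq' (Finset.Icc 1 k) i (fun _ => ε),
      Finset.sum_ite_eq' (Finset.Icc 1 k) (i+1) (fun _ => -ε)]
  -- key bound: ∑_{j ≤ i} τ j + τ (i+1) ≤ tE
  have hsplit : ∑ j ∈ Finset.Icc 1 i, τ j + ∑ j ∈ Finset.Ioc i M, τ j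
      = ∑ j ∈ Finset.Icc 1 M, τ j := by
    rw [show Finset.Icc 1 i = Finset.Ioc 0 i by rw [← Finset.Icc_add_one_left_eq_Ioc, zero_add],
        show Finset.Icc 1 M = Finset.Ioc 0 M by rw [← Finset.Icc_add_one_left_eq_Ioc, zero_add]]
    exact Finset.sum_Ioc_consecutive τ (Nat.zero_le i) (le_of_lt hiM)
  have htail : τ (i+1) ≤ ∑ j ∈ Finset.Ioc i M, τ j := by
    apply Finset.single_le_sum (f := τ)
    · intro j hj
      rw [Finset.mem_Ioc] at hj
      exact le_of_lt (hpos j (Finset.mem_Icc.mpr ⟨by omega, hj.2⟩))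
    · rw [Finset.mem_Ioc]; omega
  have hkey : ∑ j ∈ Finset.Icc 1 i, τ j + τ (i+1) ≤ tE := by
    rw [← hb, ← hsplit]; linarith
  -- feasibility of σ
  have hfeasσ : EnergyFeasible M t d Tpre Tpost tR tE σ := by
    refine ⟨?_, ?_, ?_, ?_, ?_⟩
    · intro j hj
      by_cases hj1 : j = i
      · rw [hj1, hσi]; linarith
      · by_cases hj2 : j = i + 1
        · rw [hj2, hσi1]; linarith
        · rw [hσother j hj1 hj2]; exact hpos j hj
    · intro k hk1 hkM
      rw [hsum k]
      split_ifs with hA hB hB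
      · linarith [ha k hk1 hkM]
      · linarith [ha k hk1 hkM]
      · exfalso
        rw [Finset.mem_Icc] at hA hB
        exact hA ⟨h1, by omega⟩
      · linarith [ha k hk1 hkM]
    · rw [hsum M, if_pos hiM', if_pos hi1M, hb]; ring
    · intro k hk
      rw [hsum k]
      split_ifs with hA hB hB
      · linarith [hc k hk]
      · -- here k = i
        rw [Finset.mem_Icc] at hA hB
        have hki : k = i := by omega
        subst hki
        have hT : Tpre k = tR - t k := hpreDef k hk
        rw [hT]
        have : ∑ j ∈ Finset.Icc 1 k, τ j ≤ tE - τ (k+1) := by linarith [hkey]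
        simp only [hε]
        linarith
      · exfalso
        rw [Finset.mem_Icc] at hA hB
        rw [Finset.mem_Icc] at hk
        exact hA ⟨h1, by omega⟩
      · linarith [hc k hk]
    · intro k hk
      rw [hsum k]
      split_ifs with hA hB hB
      · linarith [hdcon k hk]
      · linarith [hdcon k hk]
      · exfalso
        rw [Finset.mem_Icc] at hA hB
        exact hA ⟨h1, by omega⟩
      · linarith [hdcon k hk]
  -- cost comparison
  have hi1mem : i + 1 ∈ (Finset.Icc 1 M).erase i :=
    Finset.mem_erase.mpr ⟨fun h => hnei h.symm, hi1M⟩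
  have esum : ∀ f : ℕ → ℝ, ∑ j ∈ Finset.Icc 1 M, f j
      = ∑ j ∈ ((Finset.Icc 1 M).erase i).erase (i+1), f j + f (i+1) + f i := by
    intro f
    rw [← Finset.sum_erase_add (Finset.Icc 1 M) f hiM',
      ← Finset.sum_erase_add ((Finset.Icc 1 M).erase i) f hi1mem]
  have hmid : σ i = (1/2 : ℝ) * τ i + (1/2 : ℝ) * τ (i+1) := by
    rw [hσi]; simp only [hε]; ring
  have hmid2 : σ (i+1) = σ i := by rw [hσi, hσi1]; simp only [hε]; ring
  have hstrict := hconv.2 (Set.mem_Ioi.mpr hτipos) (Set.mem_Ioi.mpr hτi1pos)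
    (ne_of_lt hlt) (by norm_num : (0:ℝ) < 1/2) (by norm_num : (0:ℝ) < 1/2)
    (by norm_num : (1/2 : ℝ) + 1/2 = 1)
  simp only [smul_eq_mul] at hstrict
  rw [← hmid] at hstrict
  have hwlt : ∑ j ∈ Finset.Icc 1 M, w (σ j) < ∑ j ∈ Finset.Icc 1 M, w (τ j) := by
    rw [esum (fun j => w (σ j)), esum (fun j => w (τ j))]
    have heq : ∑ j ∈ ((Finset.Icc 1 M).erase i).erase (i+1), w (σ j)
        = ∑ j ∈ ((Finset.Icc 1 M).erase i).erase (i+1), w (τ j) := by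
      apply Finset.sum_congr rfl
      intro j hj
      rw [Finset.mem_erase, Finset.mem_erase] at hj
      rw [hσother j hj.2.1 hj.1]
    rw [heq, hmid2]
    linarith
  linarith [hopt σ hfeasσ]
end

section
/- Lemma 4, part 1 (full energy use at the time-optimum): Let τ be completion-time-optimal for the completion-time minimization problem with energy budget w_max, and suppose its completion time satisfies T_c = Σ_{i=1}^{M} τ_i > t_R − T_post,M. Then the energy budget is fully used: Σ_{i=1}^{M} w(τ_i) = w_max. -/
/-- Feasibility for the completion-time minimization problem: positivity of the
durations, the non-idling constraints (a), the energy-budget constraint (b), the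
pre-delay constraints (c) and the post-delay constraints (d). -/
def CTFeasible (M : ℕ) (t d Tpre Tpost : ℕ → ℝ) (tR : ℝ) (w : ℝ → ℝ) (wmax : ℝ)
    (τ : ℕ → ℝ) : Prop :=
  (∀ i ∈ Finset.Icc 1 M, 0 < τ i) ∧
  (∀ k, 1 ≤ k → k < M → ∑ j ∈ Finset.Icc 1 k, d j ≤ ∑ j ∈ Finset.Icc 1 k, τ j) ∧
  (∑ i ∈ Finset.Icc 1 M, w (τ i) ≤ wmax) ∧
  (∀ k ∈ Finset.Icc 1 M, ∑ j ∈ Finset.Icc 1 k, τ j ≤ t k + Tpre k) ∧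
  (∀ k ∈ Finset.Icc 1 M, tR - Tpost k ≤ ∑ j ∈ Finset.Icc 1 k, τ j)

/-- Lemma 4, part 1: if `τ` is completion-time-optimal with
energy budget `wmax` and its completion time strictly exceeds `tR - Tpost M`,
then the energy budget is fully used: `∑ w (τ i) = wmax`. -/
theorem time_optimal_full_energy
    (M : ℕ) (hM : 1 ≤ M)
    (t d Tpre Tpost : ℕ → ℝ) (tR : ℝ)
    (ht1 : t 1 = 0)
    (hmono : ∀ i, 1 ≤ i → i < M → t i ≤ t (i + 1))
    (hTpre : ∀ i ∈ Finset.Icc 1 M, 0 < Tpre i)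
    (hTpost : ∀ i ∈ Finset.Icc 1 M, 0 < Tpost i)
    (hd : ∀ i, 1 ≤ i → i < M → d i = t (i + 1) - t i)
    (w : ℝ → ℝ) (wmax : ℝ) (hwmax : 0 < wmax)
    (hconv : StrictConvexOn ℝ (Set.Ioi (0:ℝ)) w)
    (hanti : StrictAntiOn w (Set.Ioi (0:ℝ)))
    (hwpos : ∀ x ∈ Set.Ioi (0:ℝ), 0 < w x)
    (hcont : ContinuousOn w (Set.Ioi (0:ℝ)))
    (τ : ℕ → ℝ)
    (hfeas : CTFeasible M t d Tpre Tpost tR w wmax τ)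
    (hopt : ∀ σ, CTFeasible M t d Tpre Tpost tR w wmax σ →
      ∑ i ∈ Finset.Icc 1 M, τ i ≤ ∑ i ∈ Finset.Icc 1 M, σ i)
    (hgt : tR - Tpost M < ∑ i ∈ Finset.Icc 1 M, τ i) :
    ∑ i ∈ Finset.Icc 1 M, w (τ i) = wmax := by
  by_contra hne
  obtain ⟨hpos, hnib, henergy, hpre, hpost⟩ := hfeas
  have hMmem : M ∈ Finset.Icc 1 M := by simp [hM]
  have hτM : (0:ℝ) < τ M := hpos M hMmem
  have hE : 0 < wmax - ∑ i ∈ Finset.Icc 1 M, w (τ i) :=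
    sub_pos.mpr (lt_of_le_of_ne henergy hne)
  set E := wmax - ∑ i ∈ Finset.Icc 1 M, w (τ i) with hEdef
  -- continuity of w at τ M
  have hca : ContinuousAt w (τ M) :=
    (hcont.continuousAt (Ioi_mem_nhds hτM))
  obtain ⟨δ, hδpos, hδ⟩ := Metric.continuousAt_iff.mp hca E hE
  -- choose ε
  set G := (∑ i ∈ Finset.Icc 1 M, τ i) - (tR - Tpost M) with hGdef
  have hG : 0 < G := sub_pos.mpr hgt
  set ε := min (min (τ M / 2) (δ / 2)) (G / 2) with hεdef
  have hεpos : 0 < ε := by positivity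
  have hε1 : ε ≤ τ M / 2 := le_trans (min_le_left _ _) (min_le_left _ _)
  have hε2 : ε < δ := lt_of_le_of_lt (le_trans (min_le_left _ _) (min_le_right _ _)) (by linarith)
  have hε3 : ε ≤ G / 2 := min_le_right _ _
  have hσMpos : 0 < τ M - ε := by linarith
  -- the perturbed schedule
  set σ : ℕ → ℝ := Function.update τ M (τ M - ε) with hσdef
  have hσM : σ M = τ M - ε := Function.update_self _ _ _
  have hσne : ∀ i, i ≠ M → σ i = τ i := fun i hi => Function.update_of_ne hi _ _
  have key : ∀ f : ℝ → ℝ, ∑ i ∈ Finset.Icc 1 M, f (σ i)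
      = ∑ i ∈ Finset.Icc 1 M, f (τ i) - f (τ M) + f (τ M - ε) := by
    intro f
    rw [Finset.sum_eq_sum_sdiff_singleton_add hMmem (fun i => f (σ i)),
        Finset.sum_eq_sum_sdiff_singleton_add hMmem (fun i => f (τ i))]
    have h1 : ∑ i ∈ Finset.Icc 1 M \ {M}, f (σ i)
        = ∑ i ∈ Finset.Icc 1 M \ {M}, f (τ i) := by
      apply Finset.sum_congr rfl
      intro i hi
      rw [hσne i (by simpa using (Finset.mem_sdiff.mp hi).2)]
    rw [h1, hσM]; ring
  have keylt : ∀ k, k < M → ∑ j ∈ Finset.Icc 1 k, σ j = ∑ j ∈ Finset.Icc 1 k, τ j := by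
    intro k hk
    apply Finset.sum_congr rfl
    intro j hj
    exact hσne j (by simp at hj; omega)
  have hsumσ : ∑ i ∈ Finset.Icc 1 M, σ i = ∑ i ∈ Finset.Icc 1 M, τ i - ε := by
    have := key (fun x => x); simpa using by linarith [this]
  -- energy of σ
  have hwc : |w (τ M - ε) - w (τ M)| < E := by
    apply hδ
    simp only [Real.dist_eq]
    rw [abs_of_nonpos (by linarith)]
    linarith
  have hwlt : w (τ M - ε) - w (τ M) < E := lt_of_le_of_lt (le_abs_self _) hwc
  have hσfeas : CTFeasible M t d Tpre Tpost tR w wmax σ := by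
    refine ⟨?_, ?_, ?_, ?_, ?_⟩
    · intro i hi
      by_cases h : i = M
      · rw [h, hσM]; exact hσMpos
      · rw [hσne i h]; exact hpos i hi
    · intro k hk1 hk2
      rw [keylt k hk2]; exact hnib k hk1 hk2
    · have := key w
      rw [this]
      simp only [hEdef] at hwlt
      linarith
    · intro k hk
      by_cases h : k = M
      · rw [h, hsumσ]
        have := hpre M hMmem
        linarith [hεpos]
      · have hklt : k < M := by simp at hk; omega
        rw [keylt k hklt]; exact hpre k hk
    · intro k hk
      by_cases h : k = M
      · rw [h, hsumσ]
        have : ε ≤ G / 2 := hε3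
        simp only [hGdef] at this
        linarith
      · have hklt : k < M := by simp at hk; omega
        rw [keylt k hklt]; exact hpost k hk
  have := hopt σ hσfeas
  rw [hsumσ] at this
  linarith
end

section
/- Lemma 4, part 2 (time-optimal implies energy-optimal): Let τ be completion-time-optimal for the completion-time minimization problem with energy budget w_max, and suppose T_c = Σ_{i=1}^{M} τ_i > t_R − T_post,M. Then τ is energy-optimal for the fixed-horizon energy problem with end time t_E = T_c: for every vector τ' ∈ ℝ^M with τ'_i > 0 satisfying the non-idling, pre-delay and post-delay constraints and Σ_{i=1}^{M} τ'_i = T_c, it holds that Σ_{i=1}^{M} w(τ'_i) ≥ Σ_{i=1}^{M} w(τ_i), and moreover Σ_{i=1}^{M} w(τ_i) = w_max. -/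
/-- Lemma 4, part 2: if `τ` is completion-time-optimal with
energy budget `wmax` and its completion time `T_c = ∑ τ i` strictly exceeds
`tR - Tpost M`, then `τ` is energy-optimal for the fixed-horizon energy problem
with end time `t_E = T_c`: any `τ'` with positive entries satisfying the
non-idling, pre-delay and post-delay constraints and total duration `T_c` has
at least the energy cost of `τ`; moreover `∑ w (τ i) = wmax`. -/
theorem time_optimal_is_energy_optimal
    (M : ℕ) (hM : 1 ≤ M)
    (t d Tpre Tpost : ℕ → ℝ) (tR : ℝ)
    (ht1 : t 1 = 0)
    (hmono : ∀ i, 1 ≤ i → i < M → t i ≤ t (i + 1))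
    (hTpre : ∀ i ∈ Finset.Icc 1 M, 0 < Tpre i)
    (hTpost : ∀ i ∈ Finset.Icc 1 M, 0 < Tpost i)
    (hd : ∀ i, 1 ≤ i → i < M → d i = t (i + 1) - t i)
    (w : ℝ → ℝ) (wmax : ℝ) (hwmax : 0 < wmax)
    (hconv : StrictConvexOn ℝ (Set.Ioi (0:ℝ)) w)
    (hanti : StrictAntiOn w (Set.Ioi (0:ℝ)))
    (hwpos : ∀ x ∈ Set.Ioi (0:ℝ), 0 < w x)
    (hcont : ContinuousOn w (Set.Ioi (0:ℝ)))
    (τ : ℕ → ℝ)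
    (hfeas : CTFeasible M t d Tpre Tpost tR w wmax τ)
    (hopt : ∀ σ, CTFeasible M t d Tpre Tpost tR w wmax σ →
      ∑ i ∈ Finset.Icc 1 M, τ i ≤ ∑ i ∈ Finset.Icc 1 M, σ i)
    (hgt : tR - Tpost M < ∑ i ∈ Finset.Icc 1 M, τ i) :
    (∀ τ' : ℕ → ℝ,
        (∀ i ∈ Finset.Icc 1 M, 0 < τ' i) →
        (∀ k, 1 ≤ k → k < M →
          ∑ j ∈ Finset.Icc 1 k, d j ≤ ∑ j ∈ Finset.Icc 1 k, τ' j) →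
        (∀ k ∈ Finset.Icc 1 M, ∑ j ∈ Finset.Icc 1 k, τ' j ≤ t k + Tpre k) →
        (∀ k ∈ Finset.Icc 1 M, tR - Tpost k ≤ ∑ j ∈ Finset.Icc 1 k, τ' j) →
        (∑ i ∈ Finset.Icc 1 M, τ' i = ∑ i ∈ Finset.Icc 1 M, τ i) →
        ∑ i ∈ Finset.Icc 1 M, w (τ i) ≤ ∑ i ∈ Finset.Icc 1 M, w (τ' i)) ∧
    ∑ i ∈ Finset.Icc 1 M, w (τ i) = wmax := by

  classical
  have hMmem : M ∈ Finset.Icc 1 M := Finset.mem_Icc.mpr ⟨hM, le_refl M⟩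
  obtain ⟨hpos, hni, hbud, hpre, hpost⟩ := hfeas
  set Tc := ∑ i ∈ Finset.Icc 1 M, τ i with hTc
  have key : ∀ σ : ℕ → ℝ,
      (∀ i ∈ Finset.Icc 1 M, 0 < σ i) →
      (∀ k, 1 ≤ k → k < M → ∑ j ∈ Finset.Icc 1 k, d j ≤ ∑ j ∈ Finset.Icc 1 k, σ j) →
      (∀ k ∈ Finset.Icc 1 M, ∑ j ∈ Finset.Icc 1 k, σ j ≤ t k + Tpre k) →
      (∀ k ∈ Finset.Icc 1 M, tR - Tpost k ≤ ∑ j ∈ Finset.Icc 1 k, σ j) →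
      (∑ i ∈ Finset.Icc 1 M, σ i = Tc) →
      wmax ≤ ∑ i ∈ Finset.Icc 1 M, w (σ i) := by
    intro σ hp hn hpr hpo hs
    by_contra hcon
    push_neg at hcon
    set δ := wmax - ∑ i ∈ Finset.Icc 1 M, w (σ i) with hδ
    have hδpos : 0 < δ := by simp only [hδ]; linarith
    have hσM : 0 < σ M := hp M hMmem
    have hcA : ContinuousAt w (σ M) := hcont.continuousAt (Ioi_mem_nhds hσM)
    have hN : w ⁻¹' Set.Iio (w (σ M) + δ) ∈ nhds (σ M) :=
      hcA (Iio_mem_nhds (by linarith))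
    obtain ⟨r, hrpos, hball⟩ := Metric.mem_nhds_iff.mp hN
    set c := min (σ M) (Tc - (tR - Tpost M)) with hc
    have hc1 : c ≤ σ M := min_le_left _ _
    have hc2 : c ≤ Tc - (tR - Tpost M) := min_le_right _ _
    have hcpos : 0 < c := lt_min hσM (by linarith)
    set e := min (r / 2) (c / 2) with he
    have he1 : e ≤ r / 2 := min_le_left _ _
    have he2 : e ≤ c / 2 := min_le_right _ _
    have hepos : 0 < e := lt_min (by linarith) (by linarith)
    have heσ : e < σ M := by linarith
    have heT : e < Tc - (tR - Tpost M) := by linarith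
    have hmem : σ M - e ∈ Metric.ball (σ M) r := by
      rw [Metric.mem_ball, Real.dist_eq, abs_of_nonpos (by linarith)]
      linarith
    have hwlt : w (σ M - e) < w (σ M) + δ := hball hmem
    set σ' : ℕ → ℝ := fun i => if i = M then σ M - e else σ i with hσ'def
    have hksum : ∀ k, k < M → ∑ j ∈ Finset.Icc 1 k, σ' j = ∑ j ∈ Finset.Icc 1 k, σ j := by
      intro k hk
      refine Finset.sum_congr rfl fun j hj => ?_
      have hjk := Finset.mem_Icc.mp hj
      simp only [hσ'def]
      rw [if_neg (by omega)]
    have hMsum : ∑ j ∈ Finset.Icc 1 M, σ' j = (∑ j ∈ Finset.Icc 1 M, σ j) - e := by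
      have h1 : ∀ j ∈ Finset.Icc 1 M, σ' j = σ j - (if j = M then e else 0) := by
        intro j _
        simp only [hσ'def]
        by_cases h : j = M <;> simp [h]
      rw [Finset.sum_congr rfl h1, Finset.sum_sub_distrib,
        Finset.sum_ite_eq' (Finset.Icc 1 M) M (fun _ => e), if_pos hMmem]
    have hwsum : ∑ j ∈ Finset.Icc 1 M, w (σ' j)
        = (∑ j ∈ Finset.Icc 1 M, w (σ j)) + (w (σ M - e) - w (σ M)) := by
      have h1 : ∀ j ∈ Finset.Icc 1 M, w (σ' j)
          = w (σ j) + (if j = M then w (σ M - e) - w (σ M) else 0) := by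
        intro j _
        simp only [hσ'def]
        by_cases h : j = M <;> simp [h]
      rw [Finset.sum_congr rfl h1, Finset.sum_add_distrib,
        Finset.sum_ite_eq' (Finset.Icc 1 M) M (fun _ => w (σ M - e) - w (σ M)),
        if_pos hMmem]
    have hfeas' : CTFeasible M t d Tpre Tpost tR w wmax σ' := by
      refine ⟨?_, ?_, ?_, ?_, ?_⟩
      · intro i hi
        by_cases h : i = M
        · simp only [hσ'def, h, if_pos rfl]; linarith
        · simp only [hσ'def, if_neg h]; exact hp i hi
      · intro k h1k hkM
        rw [hksum k hkM]; exact hn k h1k hkM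
      · rw [hwsum]; linarith
      · intro k hk
        by_cases hkM : k = M
        · subst hkM
          rw [hMsum]
          have := hpr k hk
          linarith
        · have hkk := Finset.mem_Icc.mp hk
          rw [hksum k (by omega)]
          exact hpr k hk
      · intro k hk
        by_cases hkM : k = M
        · subst hkM
          rw [hMsum, hs]
          linarith
        · have hkk := Finset.mem_Icc.mp hk
          rw [hksum k (by omega)]
          exact hpo k hk
    have hle := hopt σ' hfeas'
    rw [hMsum, hs] at hle
    linarith
  have hEq : ∑ i ∈ Finset.Icc 1 M, w (τ i) = wmax :=
    le_antisymm hbud (key τ hpos hni hpre hpost hTc.symm)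
  refine ⟨?_, hEq⟩
  intro τ' h1 h2 h3 h4 h5
  rw [hEq]
  exact key τ' h1 h2 h3 h4 h5
end

section
/- Lemma 5 (converse of Lemma 4): Let τ ∈ ℝ^M with τ_i > 0 satisfy the non-idling, pre-delay and post-delay constraints, suppose Σ_{i=1}^{M} w(τ_i) = w_max, and suppose τ minimizes the energy cost Σ_{i=1}^{M} w(·) among all vectors τ'' with τ''_i > 0 that satisfy the non-idling, pre-delay and post-delay constraints and have the same total Σ_{i=1}^{M} τ''_i = Σ_{i=1}^{M} τ_i. Then τ is completion-time-optimal for the completion-time problem with energy budget w_max: every vector τ' with τ'_i > 0 satisfying the non-idling, pre-delay, post-delay and energy-budget constraints has Σ_{i=1}^{M} τ'_i ≥ Σ_{i=1}^{M} τ_i. -/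
/-- Lemma 5, converse of Lemma 4: if `τ` satisfies the
non-idling, pre-delay and post-delay constraints, exhausts the energy budget
(`∑ w (τ i) = wmax`), and minimizes the energy cost among all constraint-satisfying
vectors with the same total duration, then `τ` is completion-time-optimal:
every feasible vector for the completion-time problem has total duration at least
`∑ τ i`. -/
theorem energy_optimal_is_time_optimal
    (M : ℕ) (hM : 1 ≤ M)
    (t d Tpre Tpost : ℕ → ℝ) (tR : ℝ)
    (ht1 : t 1 = 0)
    (hmono : ∀ i, 1 ≤ i → i < M → t i ≤ t (i + 1))
    (hTpre : ∀ i ∈ Finset.Icc 1 M, 0 < Tpre i)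
    (hTpost : ∀ i ∈ Finset.Icc 1 M, 0 < Tpost i)
    (hd : ∀ i, 1 ≤ i → i < M → d i = t (i + 1) - t i)
    (w : ℝ → ℝ) (wmax : ℝ) (hwmax : 0 < wmax)
    (hconv : StrictConvexOn ℝ (Set.Ioi (0:ℝ)) w)
    (hanti : StrictAntiOn w (Set.Ioi (0:ℝ)))
    (hwpos : ∀ x ∈ Set.Ioi (0:ℝ), 0 < w x)
    (hcont : ContinuousOn w (Set.Ioi (0:ℝ)))
    (τ : ℕ → ℝ)
    (hτpos : ∀ i ∈ Finset.Icc 1 M, 0 < τ i)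
    (hnonidle : ∀ k, 1 ≤ k → k < M →
      ∑ j ∈ Finset.Icc 1 k, d j ≤ ∑ j ∈ Finset.Icc 1 k, τ j)
    (hpre : ∀ k ∈ Finset.Icc 1 M, ∑ j ∈ Finset.Icc 1 k, τ j ≤ t k + Tpre k)
    (hpost : ∀ k ∈ Finset.Icc 1 M, tR - Tpost k ≤ ∑ j ∈ Finset.Icc 1 k, τ j)
    (hfull : ∑ i ∈ Finset.Icc 1 M, w (τ i) = wmax)
    (hEopt : ∀ τ'' : ℕ → ℝ,
        (∀ i ∈ Finset.Icc 1 M, 0 < τ'' i) →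
        (∀ k, 1 ≤ k → k < M →
          ∑ j ∈ Finset.Icc 1 k, d j ≤ ∑ j ∈ Finset.Icc 1 k, τ'' j) →
        (∀ k ∈ Finset.Icc 1 M, ∑ j ∈ Finset.Icc 1 k, τ'' j ≤ t k + Tpre k) →
        (∀ k ∈ Finset.Icc 1 M, tR - Tpost k ≤ ∑ j ∈ Finset.Icc 1 k, τ'' j) →
        (∑ i ∈ Finset.Icc 1 M, τ'' i = ∑ i ∈ Finset.Icc 1 M, τ i) →
        ∑ i ∈ Finset.Icc 1 M, w (τ i) ≤ ∑ i ∈ Finset.Icc 1 M, w (τ'' i)) :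
    ∀ τ' : ℕ → ℝ, CTFeasible M t d Tpre Tpost tR w wmax τ' →
      ∑ i ∈ Finset.Icc 1 M, τ i ≤ ∑ i ∈ Finset.Icc 1 M, τ' i := by
  intro τ' hfeas
  obtain ⟨hpos', hni', hbud', hpre', hpost'⟩ := hfeas
  by_contra hlt
  push_neg at hlt
  set ε : ℝ := ∑ i ∈ Finset.Icc 1 M, τ i - ∑ i ∈ Finset.Icc 1 M, τ' i with hε
  have hεpos : 0 < ε := by simp [hε]; linarith
  set τ'' : ℕ → ℝ := fun i => τ' i + if i = M then ε else 0 with hτ''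
  have hMmem : M ∈ Finset.Icc 1 M := by simp [hM]
  -- partial sums for k < M agree with τ'
  have hpart : ∀ k, k < M → ∑ j ∈ Finset.Icc 1 k, τ'' j = ∑ j ∈ Finset.Icc 1 k, τ' j := by
    intro k hk
    apply Finset.sum_congr rfl
    intro j hj
    have : j ≠ M := by
      rcases Finset.mem_Icc.mp hj with ⟨_, h2⟩; omega
    simp [hτ'', this]
  -- total sum
  have htot : ∑ i ∈ Finset.Icc 1 M, τ'' i = ∑ i ∈ Finset.Icc 1 M, τ i := by
    have : ∑ i ∈ Finset.Icc 1 M, τ'' i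
        = ∑ i ∈ Finset.Icc 1 M, τ' i + ∑ i ∈ Finset.Icc 1 M, (if i = M then ε else 0) := by
      simp [hτ'', Finset.sum_add_distrib]
    rw [this, Finset.sum_ite_eq' (Finset.Icc 1 M) M (fun _ => ε), if_pos hMmem]
    simp [hε]
  -- feasibility of τ''
  have hpos'' : ∀ i ∈ Finset.Icc 1 M, 0 < τ'' i := by
    intro i hi
    have := hpos' i hi
    simp only [hτ'']
    split <;> [linarith; linarith]
  have hni'' : ∀ k, 1 ≤ k → k < M →
      ∑ j ∈ Finset.Icc 1 k, d j ≤ ∑ j ∈ Finset.Icc 1 k, τ'' j := by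
    intro k h1 h2; rw [hpart k h2]; exact hni' k h1 h2
  have hpre'' : ∀ k ∈ Finset.Icc 1 M, ∑ j ∈ Finset.Icc 1 k, τ'' j ≤ t k + Tpre k := by
    intro k hk
    rcases lt_or_eq_of_le (Finset.mem_Icc.mp hk).2 with h | h
    · rw [hpart k h]; exact hpre' k hk
    · subst h; rw [htot]; exact hpre k hk
  have hpost'' : ∀ k ∈ Finset.Icc 1 M, tR - Tpost k ≤ ∑ j ∈ Finset.Icc 1 k, τ'' j := by
    intro k hk
    rcases lt_or_eq_of_le (Finset.mem_Icc.mp hk).2 with h | h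
    · rw [hpart k h]; exact hpost' k hk
    · subst h; rw [htot]; exact hpost k hk
  have hkey := hEopt τ'' hpos'' hni'' hpre'' hpost'' htot
  -- strict inequality on energy
  have hstrict : ∑ i ∈ Finset.Icc 1 M, w (τ'' i) < ∑ i ∈ Finset.Icc 1 M, w (τ' i) := by
    apply Finset.sum_lt_sum
    · intro i hi
      by_cases h : i = M
      · have hτ'M : τ' i ∈ Set.Ioi (0:ℝ) := hpos' i hi
        have hm : τ'' i ∈ Set.Ioi (0:ℝ) := hpos'' i hi
        have hlt2 : τ' i < τ'' i := by simp [hτ'', h]; linarith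
        exact le_of_lt (hanti hτ'M hm hlt2)
      · simp [hτ'', h]
    · refine ⟨M, hMmem, ?_⟩
      have hτ'M : τ' M ∈ Set.Ioi (0:ℝ) := hpos' M hMmem
      have hm : τ'' M ∈ Set.Ioi (0:ℝ) := hpos'' M hMmem
      have hlt2 : τ' M < τ'' M := by simp [hτ'']; linarith
      exact hanti hτ'M hm hlt2
  linarith
end

section
/- Corollary 1 (non-increasing durations at the time-optimum under post-delays only): Consider the completion-time minimization problem with energy budget w_max in the one-sided, post-delay-constrained case, i.e., with pre-delays T_pre,i = t_R − t_i for all i (so every pre-delay constraint reads Σ_{j=1}^{k} τ_j ≤ t_R). If τ is completion-time-optimal and its completion time satisfies Σ_{i=1}^{M} τ_i > t_R − T_post,M, then τ_i ≥ τ_{i+1} for all i ∈ {1,…,M−1}. -/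
lemma sum_if_Icc (k a : ℕ) (x : ℝ) (ha : 1 ≤ a) :
    ∑ j ∈ Finset.Icc 1 k, (if j = a then x else 0) = if a ≤ k then x else 0 := by
  rw [Finset.sum_ite_eq']
  simp [Finset.mem_Icc, ha]

/-- Corollary 1: in the one-sided post-delay case
(`Tpre i = tR - t i` for all `i`, so every pre-delay constraint reads
`∑_{j≤k} τ j ≤ tR`), any completion-time-optimal `τ` whose completion time
strictly exceeds `tR - Tpost M` has non-increasing durations:
`τ i ≥ τ (i+1)` for every `i ∈ {1,…,M-1}`. -/
theorem time_optimal_nonincreasing_postonly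
    (M : ℕ) (hM : 1 ≤ M)
    (t d Tpre Tpost : ℕ → ℝ) (tR : ℝ)
    (ht1 : t 1 = 0)
    (hmono : ∀ i, 1 ≤ i → i < M → t i ≤ t (i + 1))
    (hTpre : ∀ i ∈ Finset.Icc 1 M, 0 < Tpre i)
    (hTpost : ∀ i ∈ Finset.Icc 1 M, 0 < Tpost i)
    (hd : ∀ i, 1 ≤ i → i < M → d i = t (i + 1) - t i)
    (w : ℝ → ℝ) (wmax : ℝ) (hwmax : 0 < wmax)
    (hconv : StrictConvexOn ℝ (Set.Ioi (0:ℝ)) w)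
    (hanti : StrictAntiOn w (Set.Ioi (0:ℝ)))
    (hwpos : ∀ x ∈ Set.Ioi (0:ℝ), 0 < w x)
    (hcont : ContinuousOn w (Set.Ioi (0:ℝ)))
    (hpreDef : ∀ i ∈ Finset.Icc 1 M, Tpre i = tR - t i)
    (τ : ℕ → ℝ)
    (hfeas : CTFeasible M t d Tpre Tpost tR w wmax τ)
    (hopt : ∀ σ, CTFeasible M t d Tpre Tpost tR w wmax σ →
      ∑ i ∈ Finset.Icc 1 M, τ i ≤ ∑ i ∈ Finset.Icc 1 M, σ i)
    (hgt : tR - Tpost M < ∑ i ∈ Finset.Icc 1 M, τ i) :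
    ∀ i, 1 ≤ i → i < M → τ (i + 1) ≤ τ i := by
  intro i hi1 hiM
  by_contra hlt
  push_neg at hlt
  obtain ⟨hpos, hnon, hen, hpre, hpost⟩ := hfeas
  have hi1M : i + 1 ≤ M := hiM
  have hi1' : (1:ℕ) ≤ i + 1 := le_trans hi1 (Nat.le_succ i)
  have hiIcc : i ∈ Finset.Icc 1 M := Finset.mem_Icc.2 ⟨hi1, le_of_lt hiM⟩
  have hi1Icc : i + 1 ∈ Finset.Icc 1 M := Finset.mem_Icc.2 ⟨hi1', hi1M⟩
  have hMIcc : M ∈ Finset.Icc 1 M := Finset.mem_Icc.2 ⟨hM, le_rfl⟩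
  have hτipos := hpos i hiIcc
  have hτi1pos := hpos (i + 1) hi1Icc
  set c : ℝ := (τ (i + 1) - τ i) / 2 with hc
  have hcpos : 0 < c := by simp only [hc]; linarith
  set m : ℝ := τ i + c with hm
  have hmpos : 0 < m := by simp only [hm]; linarith
  have hne : i ≠ i + 1 := Nat.ne_of_lt (Nat.lt_succ_self i)
  -- the averaged vector ρ
  set g : ℕ → ℝ := fun j => (if j = i then c else 0) + (if j = i + 1 then -c else 0) with hg
  set ρ : ℕ → ℝ := fun j => τ j + g j with hρ
  have hρi : ρ i = m := by simp [hρ, hg, hne, hm]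
  have hρi1 : ρ (i + 1) = m := by
    simp only [hρ, hg, hne.symm, if_neg, if_pos, hm, hc]
    simp [Ne.symm hne]
    ring
  have hρeq : ∀ j, j ≠ i → j ≠ i + 1 → ρ j = τ j := by
    intro j h1 h2; simp [hρ, hg, h1, h2]
  have hgsum : ∀ k, ∑ j ∈ Finset.Icc 1 k, g j =
      (if i ≤ k then c else 0) + (if i + 1 ≤ k then -c else 0) := by
    intro k
    simp only [hg]
    rw [Finset.sum_add_distrib, sum_if_Icc k i c hi1, sum_if_Icc k (i+1) (-c) hi1']
  have hgnn : ∀ k, 0 ≤ ∑ j ∈ Finset.Icc 1 k, g j := by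
    intro k
    rw [hgsum k]
    rcases le_or_gt (i + 1) k with h | h
    · simp [h, le_trans (Nat.le_succ i) h]
    · rcases le_or_gt i k with h2 | h2
      · simp [h2, not_le.2 h]; linarith
      · simp [not_le.2 h2, not_le.2 (lt_trans h2 (Nat.lt_succ_self i))]
  have hρsum : ∀ k, ∑ j ∈ Finset.Icc 1 k, ρ j
      = ∑ j ∈ Finset.Icc 1 k, τ j + ∑ j ∈ Finset.Icc 1 k, g j := by
    intro k; simp only [hρ]; exact Finset.sum_add_distrib
  have hρsum_ge : ∀ k, ∑ j ∈ Finset.Icc 1 k, τ j ≤ ∑ j ∈ Finset.Icc 1 k, ρ j := by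
    intro k; rw [hρsum k]; linarith [hgnn k]
  have hρsum_eq : ∀ k, i + 1 ≤ k →
      ∑ j ∈ Finset.Icc 1 k, ρ j = ∑ j ∈ Finset.Icc 1 k, τ j := by
    intro k hk
    rw [hρsum k, hgsum k, if_pos hk, if_pos (le_trans (Nat.le_succ i) hk)]
    ring
  -- energy of ρ strictly below that of τ
  have hmid : w m < (w (τ i) + w (τ (i + 1))) / 2 := by
    have h2 := hconv.2 (Set.mem_Ioi.2 hτipos) (Set.mem_Ioi.2 hτi1pos) (ne_of_lt hlt)
      (by norm_num : (0:ℝ) < 1/2) (by norm_num : (0:ℝ) < 1/2) (by norm_num)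
    have hmm : m = (1/2 : ℝ) • τ i + (1/2 : ℝ) • τ (i + 1) := by
      simp only [smul_eq_mul, hm, hc]; ring
    rw [hmm]
    calc w ((1/2 : ℝ) • τ i + (1/2 : ℝ) • τ (i + 1))
        < (1/2 : ℝ) • w (τ i) + (1/2 : ℝ) • w (τ (i + 1)) := h2
      _ = (w (τ i) + w (τ (i + 1))) / 2 := by simp [smul_eq_mul]; ring
  have hρen : ∑ j ∈ Finset.Icc 1 M, w (ρ j)
      = ∑ j ∈ Finset.Icc 1 M, w (τ j)
        + ((w m - w (τ i)) + (w m - w (τ (i + 1)))) := by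
    have hpt : ∀ j, w (ρ j) = w (τ j)
        + ((if j = i then w m - w (τ i) else 0)
          + (if j = i + 1 then w m - w (τ (i + 1)) else 0)) := by
      intro j
      by_cases h1 : j = i
      · subst h1; rw [hρi]; simp [hne]
      · by_cases h2 : j = i + 1
        · subst h2; rw [hρi1]; simp [Ne.symm hne]
        · rw [hρeq j h1 h2]; simp [h1, h2]
    calc ∑ j ∈ Finset.Icc 1 M, w (ρ j)
        = ∑ j ∈ Finset.Icc 1 M, (w (τ j)
            + ((if j = i then w m - w (τ i) else 0)
              + (if j = i + 1 then w m - w (τ (i + 1)) else 0))) := by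
          exact Finset.sum_congr rfl fun j _ => hpt j
      _ = ∑ j ∈ Finset.Icc 1 M, w (τ j)
            + (∑ j ∈ Finset.Icc 1 M, (if j = i then w m - w (τ i) else 0)
              + ∑ j ∈ Finset.Icc 1 M, (if j = i + 1 then w m - w (τ (i + 1)) else 0)) := by
          rw [Finset.sum_add_distrib, Finset.sum_add_distrib]
      _ = ∑ j ∈ Finset.Icc 1 M, w (τ j)
            + ((w m - w (τ i)) + (w m - w (τ (i + 1)))) := by
          rw [sum_if_Icc M i _ hi1, sum_if_Icc M (i+1) _ hi1',
            if_pos (le_of_lt hiM), if_pos hi1M]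
  have hρen_lt : ∑ j ∈ Finset.Icc 1 M, w (ρ j) < wmax := by
    rw [hρen]
    have : (w m - w (τ i)) + (w m - w (τ (i + 1))) < 0 := by linarith
    linarith
  -- ρ is feasible
  have hρpos : ∀ j ∈ Finset.Icc 1 M, 0 < ρ j := by
    intro j hj
    by_cases h1 : j = i
    · subst h1; rw [hρi]; exact hmpos
    · by_cases h2 : j = i + 1
      · subst h2; rw [hρi1]; exact hmpos
      · rw [hρeq j h1 h2]; exact hpos j hj
  have hρpre : ∀ k ∈ Finset.Icc 1 M, ∑ j ∈ Finset.Icc 1 k, ρ j ≤ t k + Tpre k := by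
    intro k hk
    by_cases hki : k = i
    · subst hki
      rw [hρsum k, hgsum k, if_pos le_rfl, if_neg (Nat.not_succ_le_self k)]
      have hsplit : ∑ j ∈ Finset.Icc 1 (k + 1), τ j
          = ∑ j ∈ Finset.Icc 1 k, τ j + τ (k + 1) :=
        Finset.sum_Icc_succ_top hi1' τ
      have h1 := hpre (k + 1) hi1Icc
      have h2 : t (k + 1) + Tpre (k + 1) = tR := by
        rw [hpreDef (k + 1) hi1Icc]; ring
      have h3 : t k + Tpre k = tR := by
        rw [hpreDef k hiIcc]; ring
      rw [h2] at h1
      rw [h3]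
      have hcτ : c < τ (k + 1) := by simp only [hc]; linarith
      linarith [hsplit ▸ h1]
    · have hzero : ∑ j ∈ Finset.Icc 1 k, g j = 0 := by
        rw [hgsum k]
        rcases le_or_gt (i + 1) k with h | h
        · rw [if_pos (le_trans (Nat.le_succ i) h), if_pos h]; ring
        · have : ¬ i ≤ k := fun hik => hki (le_antisymm (Nat.lt_succ_iff.1 h) hik)
          rw [if_neg this, if_neg (not_le.2 h)]; ring
      rw [hρsum k, hzero, add_zero]
      exact hpre k hk
  have hρfeas : CTFeasible M t d Tpre Tpost tR w wmax ρ := by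
    refine ⟨hρpos, ?_, le_of_lt hρen_lt, hρpre, ?_⟩
    · intro k hk1 hkM
      exact le_trans (hnon k hk1 hkM) (hρsum_ge k)
    · intro k hk
      exact le_trans (hpost k hk) (hρsum_ge k)
  have hρM : ∑ j ∈ Finset.Icc 1 M, ρ j = ∑ j ∈ Finset.Icc 1 M, τ j := hρsum_eq M hi1M
  -- now shave a bit off ρ M
  have hρMpos : 0 < ρ M := hρpos M hMIcc
  set slackE : ℝ := wmax - ∑ j ∈ Finset.Icc 1 M, w (ρ j) with hsE
  have hslackE : 0 < slackE := by simp only [hsE]; linarith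
  set slackT : ℝ := ∑ j ∈ Finset.Icc 1 M, τ j - (tR - Tpost M) with hsT
  have hslackT : 0 < slackT := by simp only [hsT]; linarith
  have hcA : ContinuousAt w (ρ M) := hcont.continuousAt (Ioi_mem_nhds hρMpos)
  have hev : ∀ᶠ x in nhds (ρ M), w x < w (ρ M) + slackE := by
    have : Set.Iio (w (ρ M) + slackE) ∈ nhds (w (ρ M)) :=
      Iio_mem_nhds (by linarith)
    exact hcA this
  obtain ⟨ε, hεpos, hε⟩ := Metric.eventually_nhds_iff.1 hev
  set δ : ℝ := min (min (ε / 2) (ρ M / 2)) (slackT / 2) with hδ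
  have hδpos : 0 < δ :=
    lt_min (lt_min (half_pos hεpos) (half_pos hρMpos)) (half_pos hslackT)
  have hδε : δ < ε :=
    lt_of_le_of_lt (le_trans (min_le_left _ _) (min_le_left _ _)) (half_lt_self hεpos)
  have hδρ : δ < ρ M :=
    lt_of_le_of_lt (le_trans (min_le_left _ _) (min_le_right _ _)) (half_lt_self hρMpos)
  have hδT : δ < slackT := lt_of_le_of_lt (min_le_right _ _) (half_lt_self hslackT)
  set σ : ℕ → ℝ := fun j => if j = M then ρ M - δ else ρ j with hσ
  have hσpt : ∀ j, σ j = ρ j + (if j = M then -δ else 0) := by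
    intro j; by_cases h : j = M <;> simp [hσ, h, sub_eq_add_neg]
  have hσsum : ∀ k, ∑ j ∈ Finset.Icc 1 k, σ j
      = ∑ j ∈ Finset.Icc 1 k, ρ j + (if M ≤ k then -δ else 0) := by
    intro k
    calc ∑ j ∈ Finset.Icc 1 k, σ j
        = ∑ j ∈ Finset.Icc 1 k, (ρ j + (if j = M then -δ else 0)) :=
          Finset.sum_congr rfl fun j _ => hσpt j
      _ = ∑ j ∈ Finset.Icc 1 k, ρ j + ∑ j ∈ Finset.Icc 1 k, (if j = M then -δ else 0) :=
          Finset.sum_add_distrib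
      _ = ∑ j ∈ Finset.Icc 1 k, ρ j + (if M ≤ k then -δ else 0) := by
          rw [sum_if_Icc k M (-δ) hM]
  have hσsum_lt : ∀ k, ∑ j ∈ Finset.Icc 1 k, σ j ≤ ∑ j ∈ Finset.Icc 1 k, ρ j := by
    intro k; rw [hσsum k]
    rcases le_or_gt M k with h | h
    · rw [if_pos h]; linarith
    · rw [if_neg (not_le.2 h)]; linarith
  have hσsum_eqlt : ∀ k, k < M → ∑ j ∈ Finset.Icc 1 k, σ j = ∑ j ∈ Finset.Icc 1 k, ρ j := by
    intro k hk; rw [hσsum k, if_neg (not_le.2 hk)]; ring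
  have hσsumM : ∑ j ∈ Finset.Icc 1 M, σ j = ∑ j ∈ Finset.Icc 1 M, ρ j - δ := by
    rw [hσsum M, if_pos le_rfl]; ring
  have hσen : ∑ j ∈ Finset.Icc 1 M, w (σ j)
      = ∑ j ∈ Finset.Icc 1 M, w (ρ j) + (w (ρ M - δ) - w (ρ M)) := by
    have hpt : ∀ j, w (σ j) = w (ρ j) + (if j = M then w (ρ M - δ) - w (ρ M) else 0) := by
      intro j; by_cases h : j = M
      · subst h; simp [hσ]
      · simp [hσ, h]
    calc ∑ j ∈ Finset.Icc 1 M, w (σ j)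
        = ∑ j ∈ Finset.Icc 1 M, (w (ρ j) + (if j = M then w (ρ M - δ) - w (ρ M) else 0)) :=
          Finset.sum_congr rfl fun j _ => hpt j
      _ = ∑ j ∈ Finset.Icc 1 M, w (ρ j)
          + ∑ j ∈ Finset.Icc 1 M, (if j = M then w (ρ M - δ) - w (ρ M) else 0) :=
          Finset.sum_add_distrib
      _ = ∑ j ∈ Finset.Icc 1 M, w (ρ j) + (w (ρ M - δ) - w (ρ M)) := by
          rw [sum_if_Icc M M _ hM, if_pos le_rfl]
  have hwδ : w (ρ M - δ) < w (ρ M) + slackE := by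
    apply hε
    simp only [Real.dist_eq]
    rw [abs_of_nonpos (by linarith)]
    linarith
  obtain ⟨hρpos', hρnon', hρen', hρpre', hρpost'⟩ := hρfeas
  have hσfeas : CTFeasible M t d Tpre Tpost tR w wmax σ := by
    refine ⟨?_, ?_, ?_, ?_, ?_⟩
    · intro j hj
      by_cases h : j = M
      · subst h; simp only [hσ, if_pos rfl]; linarith
      · simp only [hσ, if_neg h]; exact hρpos' j hj
    · intro k hk1 hkM
      rw [hσsum_eqlt k hkM]
      exact hρnon' k hk1 hkM
    · rw [hσen]
      simp only [hsE] at hwδ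
      linarith
    · intro k hk
      exact le_trans (hσsum_lt k) (hρpre' k hk)
    · intro k hk
      rcases lt_or_eq_of_le (Finset.mem_Icc.1 hk).2 with h | h
      · rw [hσsum_eqlt k h]; exact hρpost' k hk
      · subst h
        rw [hσsumM, hρM]
        simp only [hsT] at hδT
        linarith
  have := hopt σ hσfeas
  rw [hσsumM, hρM] at this
  linarith
end

section
/- Cost-function independence of the energy-optimal schedule: Let w₁ and w₂ both be strictly convex, strictly decreasing functions from (0,∞) to (0,∞). If τ¹ is feasible for the two-sided energy-minimization problem and minimizes Σ_{i=1}^{M} w₁(τ_i) over the feasible set, and τ² is feasible and minimizes Σ_{i=1}^{M} w₂(τ_i) over the same feasible set, then τ¹ = τ². In other words, the energy-optimal schedule does not depend on the particular strictly convex, decreasing, positive cost function. -/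
lemma pair_lt {w : ℝ → ℝ} (h : StrictConvexOn ℝ (Set.Ioi (0:ℝ)) w)
    {a b ε : ℝ} (ha : 0 < a) (hab : a < b) (hε : 0 < ε) (h2 : a + ε ≤ b - ε) :
    w (a + ε) + w (b - ε) < w a + w b := by
  have hb : 0 < b := ha.trans hab
  have hba : 0 < b - a := by linarith
  set μ := (b - (a + ε)) / (b - a) with hμdef
  set ν := (b - (b - ε)) / (b - a) with hνdef
  have hμ : 0 < μ := div_pos (by linarith) hba
  have hμ1 : μ < 1 := (div_lt_one hba).2 (by linarith)
  have hν : 0 < ν := div_pos (by linarith) hba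
  have hν1 : ν < 1 := (div_lt_one hba).2 (by linarith)
  have key : ∀ x : ℝ, ((b - x) / (b - a)) * a + (1 - (b - x) / (b - a)) * b = x := by
    intro x
    have h1 : ((b - x) / (b - a)) * (b - a) = b - x := div_mul_cancel₀ _ hba.ne'
    nlinarith [h1]
  have e1 := key (a + ε)
  have e2 := key (b - ε)
  have ha' : a ∈ Set.Ioi (0:ℝ) := ha
  have hb' : b ∈ Set.Ioi (0:ℝ) := hb
  have c1 := h.2 ha' hb' (ne_of_lt hab) hμ (show (0:ℝ) < 1 - μ by linarith)
    (show μ + (1 - μ) = 1 by ring)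
  have c2 := h.2 ha' hb' (ne_of_lt hab) hν (show (0:ℝ) < 1 - ν by linarith)
    (show ν + (1 - ν) = 1 by ring)
  simp only [smul_eq_mul] at c1 c2
  rw [e1] at c1
  rw [e2] at c2
  have hsum : μ + ν = 1 := by
    rw [hμdef, hνdef, ← add_div]
    rw [show b - (a + ε) + (b - (b - ε)) = b - a by ring]
    exact div_self hba.ne'
  have hfin : μ * w a + (1 - μ) * w b + (ν * w a + (1 - ν) * w b) = w a + w b := by
    have h1 : ν = 1 - μ := by linarith
    rw [h1]; ring
  linarith

/-- partial sums of the perturbed schedule -/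
lemma pert_sum (τ : ℕ → ℝ) (k : ℕ) (hk1 : 1 ≤ k) (η : ℝ) (n : ℕ) :
    ∑ j ∈ Finset.Icc 1 n, (τ j + (if j = k then η else 0) + (if j = k + 1 then -η else 0))
      = ∑ j ∈ Finset.Icc 1 n, τ j
        + (if k ≤ n then η else 0) + (if k + 1 ≤ n then -η else 0) := by
  rw [Finset.sum_add_distrib, Finset.sum_add_distrib,
    Finset.sum_ite_eq' (Finset.Icc 1 n) k (fun _ => η),
    Finset.sum_ite_eq' (Finset.Icc 1 n) (k+1) (fun _ => -η)]
  have h1 : k ∈ Finset.Icc 1 n ↔ k ≤ n := by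
    simp [Finset.mem_Icc, hk1]
  have h2 : k + 1 ∈ Finset.Icc 1 n ↔ k + 1 ≤ n := by
    simp [Finset.mem_Icc]
  simp only [h1, h2]

lemma pert_feasible (M : ℕ) (t d Tpre Tpost : ℕ → ℝ) (tR tE : ℝ) (τ : ℕ → ℝ)
    (hfeas : EnergyFeasible M t d Tpre Tpost tR tE τ)
    (k : ℕ) (hk1 : 1 ≤ k) (hkM : k < M) (η : ℝ)
    (h1 : 0 < τ k + η) (h2 : 0 < τ (k+1) - η)
    (h3 : ∑ j ∈ Finset.Icc 1 k, d j ≤ ∑ j ∈ Finset.Icc 1 k, τ j + η)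
    (h4 : tR - Tpost k ≤ ∑ j ∈ Finset.Icc 1 k, τ j + η)
    (h5 : ∑ j ∈ Finset.Icc 1 k, τ j + η ≤ t k + Tpre k) :
    EnergyFeasible M t d Tpre Tpost tR tE
      (fun j => τ j + (if j = k then η else 0) + (if j = k + 1 then -η else 0)) := by
  obtain ⟨hpos, ha, hb, hc, hd'⟩ := hfeas
  refine ⟨?_, ?_, ?_, ?_, ?_⟩
  · intro i hi
    dsimp only
    by_cases hik : i = k
    · rw [if_pos hik, if_neg (by omega), hik]
      linarith
    · by_cases hik1 : i = k + 1
      · rw [if_neg hik, if_pos hik1, hik1]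
        linarith
      · rw [if_neg hik, if_neg hik1]
        have := hpos i hi
        linarith
  · intro n hn1 hnM
    dsimp only
    rw [pert_sum τ k hk1 η n]
    have horig := ha n hn1 hnM
    rcases lt_trichotomy n k with h | h | h
    · rw [if_neg (by omega), if_neg (by omega)]
      linarith
    · subst h
      rw [if_pos le_rfl, if_neg (by omega)]
      linarith
    · rw [if_pos (by omega), if_pos (by omega)]
      linarith
  · dsimp only
    rw [pert_sum τ k hk1 η M, if_pos (by omega), if_pos (by omega)]
    linarith
  · intro n hn
    dsimp only
    rw [pert_sum τ k hk1 η n]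
    have hn' := Finset.mem_Icc.mp hn
    have horig := hc n hn
    rcases lt_trichotomy n k with h | h | h
    · rw [if_neg (by omega), if_neg (by omega)]
      linarith
    · subst h
      rw [if_pos le_rfl, if_neg (by omega)]
      linarith
    · rw [if_pos (by omega), if_pos (by omega)]
      linarith
  · intro n hn
    dsimp only
    rw [pert_sum τ k hk1 η n]
    have hn' := Finset.mem_Icc.mp hn
    have horig := hd' n hn
    rcases lt_trichotomy n k with h | h | h
    · rw [if_neg (by omega), if_neg (by omega)]
      linarith
    · subst h
      rw [if_pos le_rfl, if_neg (by omega)]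
      linarith
    · rw [if_pos (by omega), if_pos (by omega)]
      linarith

/-- cost of the perturbed schedule -/
lemma pert_cost (w : ℝ → ℝ) (τ : ℕ → ℝ) (M k : ℕ) (hk1 : 1 ≤ k) (hkM : k < M) (η : ℝ) :
    ∑ j ∈ Finset.Icc 1 M,
        w (τ j + (if j = k then η else 0) + (if j = k + 1 then -η else 0))
      = ∑ j ∈ Finset.Icc 1 M, w (τ j) - w (τ k) - w (τ (k+1))
        + w (τ k + η) + w (τ (k+1) - η) := by
  classical
  have hkmem : k ∈ Finset.Icc 1 M := Finset.mem_Icc.mpr ⟨hk1, by omega⟩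
  have hk1mem : k + 1 ∈ (Finset.Icc 1 M).erase k := by
    rw [Finset.mem_erase]
    exact ⟨by omega, Finset.mem_Icc.mpr ⟨by omega, by omega⟩⟩
  have split : ∀ f : ℕ → ℝ, ∑ j ∈ Finset.Icc 1 M, f j
      = f k + f (k+1) + ∑ j ∈ ((Finset.Icc 1 M).erase k).erase (k+1), f j := by
    intro f
    rw [← Finset.add_sum_erase _ f hkmem, ← Finset.add_sum_erase _ f hk1mem]
    ring
  rw [split, split (fun j => w (τ j))]
  have hcong : ∑ j ∈ ((Finset.Icc 1 M).erase k).erase (k+1),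
      w (τ j + (if j = k then η else 0) + (if j = k + 1 then -η else 0))
      = ∑ j ∈ ((Finset.Icc 1 M).erase k).erase (k+1), w (τ j) := by
    apply Finset.sum_congr rfl
    intro j hj
    rw [Finset.mem_erase, Finset.mem_erase] at hj
    rw [if_neg hj.2.1, if_neg hj.1]
    ring_nf
  rw [hcong]
  have e1 : (if k = k then η else 0) = η := if_pos rfl
  have e2 : (if k = k + 1 then -η else 0) = 0 := if_neg (by omega)
  have e3 : (if k + 1 = k then η else 0) = 0 := if_neg (by omega)
  have e4 : (if k + 1 = k + 1 then -η else 0) = -η := if_pos rfl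
  rw [e1, e2, e3, e4]
  ring_nf

lemma opt_prop (M : ℕ) (t d Tpre Tpost : ℕ → ℝ) (tR tE : ℝ)
    (w : ℝ → ℝ) (hconv : StrictConvexOn ℝ (Set.Ioi (0:ℝ)) w)
    (τ : ℕ → ℝ) (hfeas : EnergyFeasible M t d Tpre Tpost tR tE τ)
    (hopt : ∀ σ, EnergyFeasible M t d Tpre Tpost tR tE σ →
      ∑ i ∈ Finset.Icc 1 M, w (τ i) ≤ ∑ i ∈ Finset.Icc 1 M, w (σ i))
    (k : ℕ) (hk1 : 1 ≤ k) (hkM : k < M) :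
    ((∑ j ∈ Finset.Icc 1 k, d j < ∑ j ∈ Finset.Icc 1 k, τ j ∧
      tR - Tpost k < ∑ j ∈ Finset.Icc 1 k, τ j) → τ k ≤ τ (k+1)) ∧
    (∑ j ∈ Finset.Icc 1 k, τ j < t k + Tpre k → τ (k+1) ≤ τ k) := by
  have hposk : 0 < τ k := hfeas.1 k (Finset.mem_Icc.mpr ⟨hk1, by omega⟩)
  have hposk1 : 0 < τ (k+1) := hfeas.1 (k+1) (Finset.mem_Icc.mpr ⟨by omega, by omega⟩)
  constructor
  · intro ⟨hgap1, hgap2⟩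
    by_contra hcon
    push_neg at hcon
    -- τ (k+1) < τ k : decrease the k-th partial sum by ε
    set a := τ (k+1)
    set b := τ k
    set s := ∑ j ∈ Finset.Icc 1 k, τ j
    set ε := min ((b - a)/2) (min (s - ∑ j ∈ Finset.Icc 1 k, d j) (s - (tR - Tpost k)))
      with hεdef
    have hε : 0 < ε := by
      apply lt_min (by linarith) (lt_min (by linarith) (by linarith))
    have hε1 : ε ≤ (b - a)/2 := min_le_left _ _
    have hε2 : ε ≤ s - ∑ j ∈ Finset.Icc 1 k, d j := (min_le_right _ _).trans (min_le_left _ _)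
    have hε3 : ε ≤ s - (tR - Tpost k) := (min_le_right _ _).trans (min_le_right _ _)
    have hfeas' := pert_feasible M t d Tpre Tpost tR tE τ hfeas k hk1 hkM (-ε)
      (by linarith) (by linarith) (by linarith) (by linarith)
      (by
        have := hfeas.2.2.2.1 k (Finset.mem_Icc.mpr ⟨hk1, by omega⟩)
        linarith)
    have hle := hopt _ hfeas'
    rw [pert_cost w τ M k hk1 hkM (-ε)] at hle
    have hpair : w (a + ε) + w (b - ε) < w a + w b :=
      pair_lt hconv hposk1 hcon hε (by linarith)
    have : τ k + -ε = b - ε := by ring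
    rw [this] at hle
    have : τ (k+1) - -ε = a + ε := by ring
    rw [this] at hle
    linarith
  · intro hgap
    by_contra hcon
    push_neg at hcon
    -- τ k < τ (k+1) : increase the k-th partial sum by ε
    set a := τ k
    set b := τ (k+1)
    set s := ∑ j ∈ Finset.Icc 1 k, τ j
    set ε := min ((b - a)/2) (t k + Tpre k - s) with hεdef
    have hε : 0 < ε := lt_min (by linarith) (by linarith)
    have hε1 : ε ≤ (b - a)/2 := min_le_left _ _
    have hε2 : ε ≤ t k + Tpre k - s := min_le_right _ _
    have hfeas' := pert_feasible M t d Tpre Tpost tR tE τ hfeas k hk1 hkM ε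
      (by linarith) (by linarith)
      (by
        have := hfeas.2.1 k hk1 hkM
        linarith)
      (by
        have := hfeas.2.2.2.2 k (Finset.mem_Icc.mpr ⟨hk1, by omega⟩)
        linarith)
      (by linarith)
    have hle := hopt _ hfeas'
    rw [pert_cost w τ M k hk1 hkM ε] at hle
    have hpair : w (a + ε) + w (b - ε) < w a + w b :=
      pair_lt hconv hposk hcon hε (by linarith)
    linarith

lemma onesided (M : ℕ) (e : ℕ → ℝ) (h0 : e 0 = 0) (hMe : e M = 0)
    (key : ∀ k, 1 ≤ k → k < M → 0 < e k → e k - e (k-1) ≤ e (k+1) - e k) :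
    ∀ k, k ≤ M → e k ≤ 0 := by
  by_contra hcon
  push_neg at hcon
  obtain ⟨k, hkM, hk⟩ := hcon
  classical
  have hex : ∃ n, n ≤ M ∧ 0 < e n := ⟨k, hkM, hk⟩
  set k₁ := Nat.find hex with hk₁def
  obtain ⟨hk₁M, hk₁pos⟩ := Nat.find_spec hex
  rw [← hk₁def] at hk₁M hk₁pos
  have hk₁1 : 1 ≤ k₁ := by
    rcases Nat.eq_zero_or_pos k₁ with h | h
    · rw [h] at hk₁pos; rw [h0] at hk₁pos; linarith
    · exact h
  have hprev : e (k₁ - 1) ≤ 0 := by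
    have h := Nat.find_min hex (m := k₁ - 1) (by omega)
    push_neg at h
    exact h (by omega)
  set c := e k₁ - e (k₁ - 1) with hcdef
  have hc : 0 < c := by
    rw [hcdef]; linarith
  have main : ∀ n, k₁ ≤ n → n ≤ M → 0 < e n ∧ c ≤ e n - e (n-1) := by
    intro n
    induction n with
    | zero => intro h _; omega
    | succ m ih =>
      intro hk₁n hnM
      rcases eq_or_lt_of_le hk₁n with heq | hlt
      · rw [← heq]
        exact ⟨hk₁pos, le_rfl⟩
      · have hk₁m : k₁ ≤ m := by omega
        obtain ⟨hem, hdm⟩ := ih hk₁m (by omega)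
        have hm1 : 1 ≤ m := by omega
        have hmM : m < M := by omega
        have := key m hm1 hmM hem
        have hstep : c ≤ e (m+1) - e m := by linarith
        have : (m + 1) - 1 = m := by omega
        rw [this]
        exact ⟨by linarith, hstep⟩
  obtain ⟨hfin, _⟩ := main M (by omega) le_rfl
  rw [hMe] at hfin
  linarith

lemma sum_step (f : ℕ → ℝ) (k : ℕ) (hk : 1 ≤ k) :
    ∑ j ∈ Finset.Icc 1 k, f j = ∑ j ∈ Finset.Icc 1 (k-1), f j + f k := by
  obtain ⟨m, rfl⟩ : ∃ m, k = m + 1 := ⟨k - 1, by omega⟩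
  rw [Finset.sum_Icc_succ_top (by omega : 1 ≤ m + 1) f]
  congr 1

lemma sum_le_aux (M : ℕ) (t d Tpre Tpost : ℕ → ℝ) (tR tE : ℝ)
    (w₁ w₂ : ℝ → ℝ)
    (hconv₁ : StrictConvexOn ℝ (Set.Ioi (0:ℝ)) w₁)
    (hconv₂ : StrictConvexOn ℝ (Set.Ioi (0:ℝ)) w₂)
    (τ₁ τ₂ : ℕ → ℝ)
    (hfeas₁ : EnergyFeasible M t d Tpre Tpost tR tE τ₁)
    (hfeas₂ : EnergyFeasible M t d Tpre Tpost tR tE τ₂)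
    (hopt₁ : ∀ σ, EnergyFeasible M t d Tpre Tpost tR tE σ →
      ∑ i ∈ Finset.Icc 1 M, w₁ (τ₁ i) ≤ ∑ i ∈ Finset.Icc 1 M, w₁ (σ i))
    (hopt₂ : ∀ σ, EnergyFeasible M t d Tpre Tpost tR tE σ →
      ∑ i ∈ Finset.Icc 1 M, w₂ (τ₂ i) ≤ ∑ i ∈ Finset.Icc 1 M, w₂ (σ i)) :
    ∀ n, n ≤ M → ∑ j ∈ Finset.Icc 1 n, τ₁ j ≤ ∑ j ∈ Finset.Icc 1 n, τ₂ j := by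
  have h := onesided M
    (fun n => ∑ j ∈ Finset.Icc 1 n, τ₁ j - ∑ j ∈ Finset.Icc 1 n, τ₂ j)
    (by simp)
    (by
      rw [hfeas₁.2.2.1, hfeas₂.2.2.1]
      ring)
    (by
      intro k hk1 hkM hpos
      have hD : ∑ j ∈ Finset.Icc 1 k, d j ≤ ∑ j ∈ Finset.Icc 1 k, τ₂ j :=
        hfeas₂.2.1 k hk1 hkM
      have hT : tR - Tpost k ≤ ∑ j ∈ Finset.Icc 1 k, τ₂ j :=
        hfeas₂.2.2.2.2 k (Finset.mem_Icc.mpr ⟨hk1, by omega⟩)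
      have hU : ∑ j ∈ Finset.Icc 1 k, τ₁ j ≤ t k + Tpre k :=
        hfeas₁.2.2.2.1 k (Finset.mem_Icc.mpr ⟨hk1, by omega⟩)
      have P₁ := opt_prop M t d Tpre Tpost tR tE w₁ hconv₁ τ₁ hfeas₁ hopt₁ k hk1 hkM
      have P₂ := opt_prop M t d Tpre Tpost tR tE w₂ hconv₂ τ₂ hfeas₂ hopt₂ k hk1 hkM
      have h₁ : τ₁ k ≤ τ₁ (k+1) := P₁.1 ⟨by linarith, by linarith⟩
      have h₂ : τ₂ (k+1) ≤ τ₂ k := P₂.2 (by linarith)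
      have e₁ := sum_step τ₁ k hk1
      have e₂ := sum_step τ₂ k hk1
      have e₃ := sum_step τ₁ (k+1) (by omega)
      have e₄ := sum_step τ₂ (k+1) (by omega)
      have hkk : k + 1 - 1 = k := by omega
      rw [hkk] at e₃ e₄
      linarith)
  intro n hn
  have := h n hn
  linarith


/-- cost-function independence of the energy-optimal schedule.
If `τ¹` minimizes the total `w₁`-cost over the feasible set and `τ²` minimizes
the total `w₂`-cost over the same feasible set, where `w₁, w₂` are both strictly
convex, strictly decreasing and positive on `(0,∞)`, then `τ¹ = τ²` (on packets
`1,…,M`). -/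
theorem energy_optimal_cost_independent
    (M : ℕ) (hM : 1 ≤ M)
    (t d Tpre Tpost : ℕ → ℝ) (tR tE : ℝ)
    (ht1 : t 1 = 0)
    (hmono : ∀ i, 1 ≤ i → i < M → t i ≤ t (i + 1))
    (hTpre : ∀ i ∈ Finset.Icc 1 M, 0 < Tpre i)
    (hTpost : ∀ i ∈ Finset.Icc 1 M, 0 < Tpost i)
    (hd : ∀ i, 1 ≤ i → i < M → d i = t (i + 1) - t i)
    (hdM : d M = tE - t M)
    (w₁ w₂ : ℝ → ℝ)
    (hconv₁ : StrictConvexOn ℝ (Set.Ioi (0:ℝ)) w₁)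
    (hanti₁ : StrictAntiOn w₁ (Set.Ioi (0:ℝ)))
    (hwpos₁ : ∀ x ∈ Set.Ioi (0:ℝ), 0 < w₁ x)
    (hconv₂ : StrictConvexOn ℝ (Set.Ioi (0:ℝ)) w₂)
    (hanti₂ : StrictAntiOn w₂ (Set.Ioi (0:ℝ)))
    (hwpos₂ : ∀ x ∈ Set.Ioi (0:ℝ), 0 < w₂ x)
    (τ₁ τ₂ : ℕ → ℝ)
    (hfeas₁ : EnergyFeasible M t d Tpre Tpost tR tE τ₁)
    (hfeas₂ : EnergyFeasible M t d Tpre Tpost tR tE τ₂)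
    (hopt₁ : ∀ σ, EnergyFeasible M t d Tpre Tpost tR tE σ →
      ∑ i ∈ Finset.Icc 1 M, w₁ (τ₁ i) ≤ ∑ i ∈ Finset.Icc 1 M, w₁ (σ i))
    (hopt₂ : ∀ σ, EnergyFeasible M t d Tpre Tpost tR tE σ →
      ∑ i ∈ Finset.Icc 1 M, w₂ (τ₂ i) ≤ ∑ i ∈ Finset.Icc 1 M, w₂ (σ i)) :
    ∀ i ∈ Finset.Icc 1 M, τ₁ i = τ₂ i := by
  have h12 := sum_le_aux M t d Tpre Tpost tR tE w₁ w₂ hconv₁ hconv₂ τ₁ τ₂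
    hfeas₁ hfeas₂ hopt₁ hopt₂
  have h21 := sum_le_aux M t d Tpre Tpost tR tE w₂ w₁ hconv₂ hconv₁ τ₂ τ₁
    hfeas₂ hfeas₁ hopt₂ hopt₁
  have heq : ∀ n, n ≤ M → ∑ j ∈ Finset.Icc 1 n, τ₁ j = ∑ j ∈ Finset.Icc 1 n, τ₂ j :=
    fun n hn => le_antisymm (h12 n hn) (h21 n hn)
  intro i hi
  obtain ⟨hi1, hiM⟩ := Finset.mem_Icc.mp hi
  have e₁ := sum_step τ₁ i hi1
  have e₂ := sum_step τ₂ i hi1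
  have q1 := heq i hiM
  have q2 := heq (i-1) (by omega)
  linarith
end
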